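/- For all nonnegative integers m, n and complex z₁, z₂, q with q ≠ 0: h_{m,n}(z₁, z₂ | q) = Σ_{s=0}^{min(m,n)} [m choose s]_q [n choose s]_q (q;q)_s H_{m-s,n-s}(z₁, z₂ | q) · Σ_{k=0}^{s} [s choose k]_q (-1)^k q^{(m-k)(n-k)}. -/

import Mathlib

open Finset Filter

noncomputable def qPoch (a q : ℂ) (n : ℕ) : ℂ :=
  ∏ j ∈ Finset.range n, (1 - a * q ^ j)

noncomputable def qbinom (q : ℂ) : ℕ → ℕ → ℂ
  | _, 0 => 1
  | 0, _ + 1 => 0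
  | m + 1, k + 1 => qbinom q m k + q ^ (k + 1) * qbinom q m (k + 1)

/-- The first q-analogue of the 2D Hermite polynomials. -/
noncomputable def H2D (q z1 z2 : ℂ) (m n : ℕ) : ℂ :=
  ∑ k ∈ Finset.range (min m n + 1),
    qbinom q m k * qbinom q n k * (-1) ^ k * q ^ (k.choose 2) * qPoch q q k *
      z1 ^ (m - k) * z2 ^ (n - k)

/-- The second q-analogue of the 2D Hermite polynomials. -/
noncomputable def h2D (q z1 z2 : ℂ) (m n : ℕ) : ℂ :=
  ∑ j ∈ Finset.range (min m n + 1),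
    qbinom q m j * qbinom q n j * q ^ ((m - j) * (n - j)) * (-1) ^ j * qPoch q q j *
      z1 ^ (m - j) * z2 ^ (n - j)

/-- The q-2D ultraspherical (q-disk / q-Zernike) polynomials. -/
noncomputable def p2D (q b z1 z2 : ℂ) (m n : ℕ) : ℂ :=
  ∑ k ∈ Finset.range (min m n + 1),
    qbinom q m k * qbinom q n k * (-1) ^ k * q ^ (k.choose 2) * qPoch q q k *
      qPoch (b * q) q (m + n - k) * z1 ^ (m - k) * z2 ^ (n - k)

/-- The infinite q-Pochhammer product (a;q)_∞. -/
noncomputable def qPochInf (a q : ℂ) : ℂ :=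
  ∏' j : ℕ, (1 - a * q ^ j)

/-!
Expanding each `H_{m-s,n-s}` and collecting the coefficient of `z₁^{m-j} z₂^{n-j}`, the
identities `[m,s] [m-s,k] = [m,s+k] [s+k,s]` and `[j,s] (q;q)_s (q;q)_{j-s} = (q;q)_j` pull
out the factor `[m,j] [n,j] (q;q)_j`, leaving `∑_s [j,s] q^{C(j-s,2)} (-1)^{j-s} T_s` with
`T_s = ∑_k [s,k] (-1)^k q^{(m-k)(n-k)}`. Rothe's q-binomial theorem at `x = -1` gives
`∑_r [N,r] q^{C(N-r,2)} (-1)^{N-r} = δ_{N,0}`, so this is q-binomial inversion and returns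
`(-1)^j q^{(m-j)(n-j)}`, which is the coefficient of `z₁^{m-j} z₂^{n-j}` in `h_{m,n}`.
-/

section

variable (q : ℂ)

@[simp] lemma qbinom_zero_right (m : ℕ) : qbinom q m 0 = 1 := by cases m <;> rfl

lemma qbinom_succ_succ (m k : ℕ) :
    qbinom q (m + 1) (k + 1) = qbinom q m k + q ^ (k + 1) * qbinom q m (k + 1) := rfl

lemma qbinom_eq_zero_of_lt {m k : ℕ} (h : m < k) : qbinom q m k = 0 := by
  induction m generalizing k with
  | zero => obtain ⟨k, rfl⟩ := Nat.exists_eq_add_one_of_ne_zero h.ne'; rfl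
  | succ m ih =>
    obtain ⟨k, rfl⟩ := Nat.exists_eq_add_one_of_ne_zero (by omega : k ≠ 0)
    rw [qbinom_succ_succ, ih (by omega), ih (by omega), mul_zero, add_zero]

@[simp] lemma qbinom_self (n : ℕ) : qbinom q n n = 1 := by
  induction n with
  | zero => rfl
  | succ n ih =>
    rw [qbinom_succ_succ, ih, qbinom_eq_zero_of_lt q n.lt_add_one, mul_zero, add_zero]

@[simp] lemma qPoch_zero (a : ℂ) : qPoch a q 0 = 1 := prod_range_zero _

lemma qPoch_succ (a : ℂ) (n : ℕ) : qPoch a q (n + 1) = qPoch a q n * (1 - a * q ^ n) :=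
  prod_range_succ _ _

lemma qbinom_mul_qPoch_mul_qPoch {m k : ℕ} (hk : k ≤ m) :
    qbinom q m k * qPoch q q k * qPoch q q (m - k) = qPoch q q m := by
  induction m generalizing k with
  | zero =>
    obtain rfl : k = 0 := by omega
    simp
  | succ m ih =>
    rcases k with _ | k
    · simp
    rcases Nat.lt_or_ge k m with hkm | hkm
    · obtain ⟨d, rfl⟩ : ∃ d, m = k + 1 + d := ⟨m - k - 1, by omega⟩
      have h₁ := ih (k := k) (by omega)
      have h₂ := ih (k := k + 1) (by omega)
      rw [show k + 1 + d - k = d + 1 by omega, qPoch_succ q q d] at h₁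
      rw [show k + 1 + d - (k + 1) = d by omega, qPoch_succ q q k] at h₂
      rw [show k + 1 + d + 1 - (k + 1) = d + 1 by omega, qbinom_succ_succ, qPoch_succ q q k,
        qPoch_succ q q d, qPoch_succ q q (k + 1 + d)]
      linear_combination (1 - q * q ^ k) * h₁ + q ^ (k + 1) * (1 - q * q ^ d) * h₂
    · obtain rfl : k = m := by omega
      rw [qbinom_succ_succ, qbinom_self, qbinom_eq_zero_of_lt q k.lt_add_one, Nat.sub_self,
        qPoch_zero]
      ring

lemma qbinom_mul_qbinom_add (m s k : ℕ) :
    qbinom q m (s + k) * qbinom q (s + k) s = qbinom q m s * qbinom q (m - s) k := by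
  induction m generalizing s k with
  | zero =>
    rcases s with _ | s
    · simp
    · rw [qbinom_eq_zero_of_lt q (by omega : 0 < s + 1 + k),
        qbinom_eq_zero_of_lt q (by omega : 0 < s + 1)]
      ring
  | succ m ih =>
    rcases s with _ | s
    · simp
    rcases k with _ | k
    · simp
    have pascal : qbinom q m (s + 1) * qbinom q (m - s) (k + 1) =
        qbinom q m (s + 1) * (qbinom q (m - (s + 1)) k +
          q ^ (k + 1) * qbinom q (m - (s + 1)) (k + 1)) := by
      rcases Nat.lt_or_ge s m with h | h
      · rw [show m - s = m - (s + 1) + 1 by omega, qbinom_succ_succ]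
      · rw [qbinom_eq_zero_of_lt q (by omega : m < s + 1), zero_mul, zero_mul]
    rw [show s + 1 + (k + 1) = s + k + 1 + 1 by omega, qbinom_succ_succ q m (s + k + 1),
      Nat.add_sub_add_right, qbinom_succ_succ q m s]
    have h₁ := ih s (k + 1)
    have h₂ := ih (s + 1) k
    have h₃ := ih (s + 1) (k + 1)
    rw [show s + (k + 1) = s + k + 1 by omega] at h₁
    rw [show s + 1 + k = s + k + 1 by omega] at h₂
    rw [show s + 1 + (k + 1) = s + k + 1 + 1 by omega] at h₃
    linear_combination qbinom q m (s + k + 1) * qbinom_succ_succ q (s + k + 1) s + h₁ +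
      q ^ (s + 1) * h₂ + q ^ (s + k + 2) * h₃ - q ^ (s + 1) * pascal

lemma sum_qbinom_mul_pow (x : ℂ) (N : ℕ) :
    ∑ r ∈ range (N + 1), qbinom q N r * q ^ (N - r).choose 2 * x ^ (N - r) =
      qPoch (-x) q N := by
  induction N with
  | zero => simp
  | succ N ih =>
    have shift : ∀ r ∈ range (N + 1), q ^ r * qbinom q N r * q ^ (N + 1 - r).choose 2 *
        x ^ (N + 1 - r) = x * q ^ N * (qbinom q N r * q ^ (N - r).choose 2 * x ^ (N - r)) := by
      intro r hr
      obtain ⟨d, rfl⟩ : ∃ d, N = r + d := ⟨N - r, by grind⟩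
      rw [show r + d + 1 - r = d + 1 by omega, Nat.add_sub_cancel_left, Nat.choose_succ_succ',
        Nat.choose_one_right]
      ring
    -- `∑_{r ≤ N+1} q^r [N,r] q^{C(N+1-r,2)} x^{N+1-r}` is `x q^N (-x;q)_N` by `shift`, and its
    -- split off `r = 0` is the second half of the Pascal expansion of the left side
    have h := sum_range_succ' (fun r ↦ q ^ r * qbinom q N r * q ^ (N + 1 - r).choose 2 *
      x ^ (N + 1 - r)) (N + 1)
    rw [sum_range_succ, qbinom_eq_zero_of_lt q N.lt_add_one, sum_congr rfl shift, ← mul_sum,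
      ih] at h
    rw [sum_range_succ', qPoch_succ]
    simp only [qbinom_succ_succ, Nat.add_sub_add_right, add_mul, sum_add_distrib, ih,
      qbinom_zero_right, Nat.sub_zero] at h ⊢
    linear_combination -h

lemma sum_qbinom_mul_neg_one_pow (N : ℕ) :
    ∑ r ∈ range (N + 1), qbinom q N r * q ^ (N - r).choose 2 * (-1) ^ (N - r) =
      if N = 0 then 1 else 0 := by
  rw [sum_qbinom_mul_pow, neg_neg]
  rcases N with _ | N
  · simp
  · exact prod_eq_zero (mem_range.2 N.succ_pos) (by simp)

lemma sum_range_qbinom_mul_of_le {s N : ℕ} (h : s ≤ N) (f : ℕ → ℂ) :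
    ∑ k ∈ range (N + 1), qbinom q s k * f k = ∑ k ∈ range (s + 1), qbinom q s k * f k :=
  (sum_subset (range_subset_range.2 (by omega)) fun k _ hk ↦ by
    rw [qbinom_eq_zero_of_lt q (by simpa using hk), zero_mul]).symm

lemma sum_qbinom_mul_neg_one_pow_mul_qbinom {j k : ℕ} (h : k ≤ j) :
    ∑ s ∈ range (j + 1), qbinom q j s * q ^ (j - s).choose 2 * (-1) ^ (j - s) * qbinom q s k =
      if j = k then 1 else 0 := by
  rw [show j + 1 = k + (j - k + 1) by omega, sum_range_add,
    sum_eq_zero fun s hs ↦ by rw [qbinom_eq_zero_of_lt q (k := k) (by simpa using hs), mul_zero],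
    zero_add]
  have hterm : ∀ i ∈ range (j - k + 1), qbinom q j (k + i) * q ^ (j - (k + i)).choose 2 *
      (-1) ^ (j - (k + i)) * qbinom q (k + i) k =
      qbinom q j k * (qbinom q (j - k) i * q ^ (j - k - i).choose 2 * (-1) ^ (j - k - i)) := by
    intro i _
    rw [Nat.sub_add_eq]
    linear_combination
      q ^ (j - k - i).choose 2 * (-1) ^ (j - k - i) * qbinom_mul_qbinom_add q j k i
  rw [sum_congr rfl hterm, ← mul_sum, sum_qbinom_mul_neg_one_pow]
  rcases h.eq_or_lt with rfl | hlt
  · simp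
  · simp [hlt.ne', Nat.sub_eq_zero_iff_le, hlt]

lemma sum_qbinom_inversion (a : ℕ → ℂ) (j : ℕ) :
    ∑ s ∈ range (j + 1), qbinom q j s * q ^ (j - s).choose 2 * (-1) ^ (j - s) *
      ∑ k ∈ range (s + 1), qbinom q s k * a k = a j := by
  calc
    _ = ∑ s ∈ range (j + 1), ∑ k ∈ range (j + 1),
        qbinom q j s * q ^ (j - s).choose 2 * (-1) ^ (j - s) * (qbinom q s k * a k) :=
      sum_congr rfl fun s hs ↦ by
          rw [← sum_range_qbinom_mul_of_le q (N := j) (mem_range_succ_iff.1 hs),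
            mul_sum]
    _ = ∑ k ∈ range (j + 1), (∑ s ∈ range (j + 1),
        qbinom q j s * q ^ (j - s).choose 2 * (-1) ^ (j - s) * qbinom q s k) * a k := by
      rw [sum_comm]
      simp only [sum_mul, mul_assoc]
    _ = a j := by
      rw [sum_congr rfl fun k hk ↦ by
        rw [sum_qbinom_mul_neg_one_pow_mul_qbinom q (mem_range_succ_iff.1 hk)]]
      simp

lemma qbinom_mul_qbinom_mul_qPoch_mul_H2D (z1 z2 : ℂ) (m n s : ℕ) :
    qbinom q m s * qbinom q n s * qPoch q q s * H2D q z1 z2 (m - s) (n - s) =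
      ∑ k ∈ range (min (m - s) (n - s) + 1),
        qbinom q m (s + k) * qbinom q n (s + k) * qPoch q q (s + k) *
          z1 ^ (m - (s + k)) * z2 ^ (n - (s + k)) *
          (qbinom q (s + k) s * q ^ k.choose 2 * (-1) ^ k) := by
  rw [H2D, mul_sum]
  refine sum_congr rfl fun k _ ↦ ?_
  have hP := qbinom_mul_qPoch_mul_qPoch q (Nat.le_add_right s k)
  rw [Nat.add_sub_cancel_left] at hP
  calc
    _ = (qbinom q m s * qbinom q (m - s) k) * (qbinom q n s * qbinom q (n - s) k) *
          qPoch q q s * qPoch q q k * q ^ k.choose 2 * (-1) ^ k *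
          z1 ^ (m - (s + k)) * z2 ^ (n - (s + k)) := by
      rw [Nat.sub_sub, Nat.sub_sub]; ring
    _ = _ := by
      rw [← qbinom_mul_qbinom_add, ← qbinom_mul_qbinom_add, ← hP]; ring

end

theorem stmt15_general (m n : ℕ) (z1 z2 q : ℂ) :
    h2D q z1 z2 m n =
      ∑ s ∈ Finset.range (min m n + 1),
        qbinom q m s * qbinom q n s * qPoch q q s * H2D q z1 z2 (m - s) (n - s) *
          ∑ k ∈ Finset.range (s + 1),
            qbinom q s k * (-1) ^ k * q ^ ((m - k) * (n - k)) := by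
  simp only [mul_assoc (qbinom q _ _) ((-1 : ℂ) ^ _)]
  symm
  calc
    _ = ∑ s ∈ range (min m n + 1), ∑ k ∈ range (min m n + 1 - s),
        qbinom q m (s + k) * qbinom q n (s + k) * qPoch q q (s + k) *
          z1 ^ (m - (s + k)) * z2 ^ (n - (s + k)) *
          (qbinom q (s + k) s * q ^ k.choose 2 * (-1) ^ k) *
          ∑ i ∈ range (s + 1), qbinom q s i * ((-1) ^ i * q ^ ((m - i) * (n - i))) :=
      sum_congr rfl fun s hs ↦ by
          rw [qbinom_mul_qbinom_mul_qPoch_mul_H2D, sum_mul,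
            show min (m - s) (n - s) + 1 = min m n + 1 - s by grind]
    _ = ∑ j ∈ range (min m n + 1), qbinom q m j * qbinom q n j * qPoch q q j *
          z1 ^ (m - j) * z2 ^ (n - j) * ∑ s ∈ range (j + 1),
            qbinom q j s * q ^ (j - s).choose 2 * (-1) ^ (j - s) *
              ∑ i ∈ range (s + 1), qbinom q s i * ((-1) ^ i * q ^ ((m - i) * (n - i))) := by
      rw [← sum_range_diag_flip]
      refine sum_congr rfl fun j _ ↦ ?_
      rw [mul_sum]
      refine sum_congr rfl fun s hs ↦ ?_
      rw [Nat.add_sub_cancel' (mem_range_succ_iff.1 hs)]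
      ring
    _ = h2D q z1 z2 m n := by
      simp only [sum_qbinom_inversion, h2D]
      refine sum_congr rfl fun j _ ↦ ?_
      ring

theorem stmt15 (m n : ℕ) (z1 z2 q : ℂ) (hq : q ≠ 0) :
    h2D q z1 z2 m n =
      ∑ s ∈ Finset.range (min m n + 1),
        qbinom q m s * qbinom q n s * qPoch q q s * H2D q z1 z2 (m - s) (n - s) *
          ∑ k ∈ Finset.range (s + 1),
            qbinom q s k * (-1) ^ k * q ^ ((m - k) * (n - k)) :=
  stmt15_general m n z1 z2 q
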